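/- Let I be a two-sided ideal of a ring R with I contained in the Jacobson radical J(R). Then R is a CSNC ring if and only if I is nil (every element of I is nilpotent) and the quotient ring R/I is a CSNC ring. -/

import Mathlib

/-- An element `a` of a ring is *clean* if `a = e + u` for some idempotent `e` and unit `u`. -/
def IsCleanElem {R : Type*} [Ring R] (a : R) : Prop :=
  ∃ e u : R, IsIdempotentElem e ∧ IsUnit u ∧ a = e + u

/-- An element `a` of a ring is *strongly nil-clean* if `a = e + q` for some idempotent `e`
and nilpotent `q` with `e * q = q * e`. -/
def IsStronglyNilCleanElem {R : Type*} [Ring R] (a : R) : Prop :=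
  ∃ e q : R, IsIdempotentElem e ∧ IsNilpotent q ∧ e * q = q * e ∧ a = e + q

/-- A ring is a *CSNC ring* if every clean element is strongly nil-clean. -/
def IsCSNCRing (R : Type*) [Ring R] : Prop :=
  ∀ a : R, IsCleanElem a → IsStronglyNilCleanElem a

/-!
An element `a` is strongly nil-clean exactly when `a - a²` is nilpotent: if `(a - a²)ⁿ = 0`, the
idempotent `e = 1 - (1 - aⁿ)ⁿ` is a polynomial in `a` and `a - e` is a multiple of `a - a²` in
`ℤ[a]`. Hence the CSNC property passes between `R` and `R/I` once clean elements of `R/I` lift to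
clean elements of `R` (idempotents lift along the nil ideal `I`, units lift because `I ⊆ J(R)`)
and nilpotency of `a - a²` modulo `I` lifts to `R` (`I` is nil). In a CSNC ring every `x ∈ J(R)`
is clean as `1 + (x - 1)`, so `x (1 - x)` is nilpotent, and `1 - x` is a unit commuting with `x`.
-/

open Polynomial

section CommRing

variable {R : Type*} [CommRing R]

theorem sub_sq_dvd_sub_pow_succ (x : R) (n : ℕ) : x - x ^ 2 ∣ x - x ^ (n + 1) := by
  have h : 1 - x ∣ 1 - x ^ n := by simpa using sub_dvd_pow_sub_pow (1 : R) x n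
  rw [sq, ← mul_one_sub, pow_succ', ← mul_one_sub]
  exact mul_dvd_mul_left x h

theorem sub_sq_dvd_sub_one_sub_one_sub_pow_pow (x : R) (n : ℕ) :
    x - x ^ 2 ∣ x - (1 - (1 - x ^ (n + 1)) ^ (n + 1)) := by
  have h₀ : x - x ^ 2 ∣ (1 - x ^ (n + 1)) - (1 - x) := by
    simpa using sub_sq_dvd_sub_pow_succ x n
  have h₁ : x - x ^ 2 ∣ (1 - x ^ (n + 1)) ^ (n + 1) - (1 - x) ^ (n + 1) :=
    h₀.trans (sub_dvd_pow_sub_pow _ _ (n + 1))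
  have h₂ : x - x ^ 2 ∣ (1 - x) ^ (n + 1) - (1 - x) := by
    have := sub_sq_dvd_sub_pow_succ (1 - x) n
    rwa [show (1 - x) - (1 - x) ^ 2 = x - x ^ 2 by ring, ← dvd_neg, neg_sub] at this
  convert dvd_add h₁ h₂ using 1
  ring

end CommRing

section Ring

variable {R S : Type*} [Ring R] [Ring S]

theorem IsCleanElem.map {a : R} (h : IsCleanElem a) (f : R →+* S) : IsCleanElem (f a) := by
  obtain ⟨e, u, he, hu, rfl⟩ := h
  exact ⟨f e, f u, he.map f, hu.map f, map_add f e u⟩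

theorem IsStronglyNilCleanElem.map {a : R} (h : IsStronglyNilCleanElem a) (f : R →+* S) :
    IsStronglyNilCleanElem (f a) := by
  obtain ⟨e, q, he, hq, hc, rfl⟩ := h
  exact ⟨f e, f q, he.map f, hq.map f, by rw [← map_mul, hc, map_mul], map_add f e q⟩

theorem IsStronglyNilCleanElem.isNilpotent_sub_sq {a : R} (h : IsStronglyNilCleanElem a) :
    IsNilpotent (a - a ^ 2) := by
  obtain ⟨e, q, he, hq, hc, rfl⟩ := h
  have hc : Commute e q := hc
  have key : (e + q) - (e + q) ^ 2 = q * (1 - e - e - q) := by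
    simp only [sq, mul_add, add_mul, mul_sub, mul_one, he.eq, hc.eq]
    abel
  rw [key]
  exact (((Commute.one_right q).sub_right hc.symm).sub_right hc.symm |>.sub_right
    (Commute.refl q)).isNilpotent_mul_right hq

theorem IsStronglyNilCleanElem.of_isNilpotent_sub_sq {a : R} (h : IsNilpotent (a - a ^ 2)) :
    IsStronglyNilCleanElem a := by
  obtain ⟨n, hn⟩ := h
  replace hn : (a - a ^ 2) ^ (n + 1) = 0 := by rw [pow_succ, hn, zero_mul]
  set e := 1 - (1 - a ^ (n + 1)) ^ (n + 1)
  have hae : Commute a e :=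
    (Commute.one_right a).sub_right (((Commute.one_right a).sub_right
      ((Commute.refl a).pow_right _)).pow_right _)
  have hnil : IsNilpotent (a - e) := by
    have hdvd := map_dvd (aeval a)
      (pow_dvd_pow_of_dvd (sub_sq_dvd_sub_one_sub_one_sub_pow_pow (X : ℤ[X]) n) (n + 1))
    simp only [map_pow, map_sub, map_one, aeval_X, hn, zero_dvd_iff] at hdvd
    exact ⟨n + 1, hdvd⟩
  refine ⟨e, a - e, isIdempotentElem_one_sub_one_sub_pow_pow a (n + 1) hn, hnil, ?_, by abel⟩
  exact (hae.symm.sub_right (Commute.refl e)).eq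

theorem isUnit_of_mul_eq_one_of_mul_eq_one {a l r : R} (hl : l * a = 1) (hr : a * r = 1) :
    IsUnit a :=
  isUnit_iff_exists.2 ⟨r, hr, left_inv_eq_right_inv hl hr ▸ hl⟩

end Ring

namespace TwoSidedIdeal

variable {R : Type*} [Ring R]

theorem exists_mul_one_sub_eq_one_of_mem_jacobson_bot {x : R}
    (hx : x ∈ jacobson (⊥ : TwoSidedIdeal R)) : ∃ z : R, z * (1 - x) = 1 := by
  obtain ⟨z, hz⟩ := mem_jacobson_iff.mp hx (-1)
  refine ⟨z, ?_⟩
  rw [mem_bot, mul_neg_one, neg_mul, sub_eq_zero] at hz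
  rw [mul_sub, mul_one, ← hz]
  abel

theorem isUnit_one_sub_of_mem_jacobson_bot {x : R} (hx : x ∈ jacobson (⊥ : TwoSidedIdeal R)) :
    IsUnit (1 - x) := by
  obtain ⟨z, hz⟩ := exists_mul_one_sub_eq_one_of_mem_jacobson_bot hx
  -- `z = 1 - (-z x)` with `-z x ∈ J(R)`, so `z` has a left inverse as well
  obtain ⟨w, hw⟩ := exists_mul_one_sub_eq_one_of_mem_jacobson_bot
    (neg_mem _ (mul_mem_left _ z x hx))
  have hz' : 1 - -(z * x) = z := by nth_rewrite 1 [← hz]; noncomm_ring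
  rw [hz'] at hw
  exact isUnit_of_mul_eq_one_of_mul_eq_one hz (left_inv_eq_right_inv hw hz ▸ hw)

variable {I : TwoSidedIdeal R}

theorem mk'_eq_zero_iff {x : R} : I.ringCon.mk' x = 0 ↔ x ∈ I := by
  rw [← mem_ker, ker_ringCon_mk']

theorem isUnit_of_isUnit_mk' (hI : I ≤ jacobson ⊥) {u : R} (hu : IsUnit (I.ringCon.mk' u)) :
    IsUnit u := by
  obtain ⟨v, hv⟩ := I.ringCon.mk'_surjective ↑hu.unit⁻¹
  have unit_of_mk'_eq_one : ∀ y : R, I.ringCon.mk' y = 1 → IsUnit y := fun y hy => by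
    simpa using isUnit_one_sub_of_mem_jacobson_bot (hI (mk'_eq_zero_iff.mp
      (show I.ringCon.mk' (1 - y) = 0 by rw [map_sub, map_one, hy, sub_self])))
  obtain ⟨a, ha⟩ := unit_of_mk'_eq_one (u * v) (by rw [map_mul, hv, IsUnit.mul_val_inv])
  obtain ⟨b, hb⟩ := unit_of_mk'_eq_one (v * u) (by rw [map_mul, hv, IsUnit.val_inv_mul])
  refine isUnit_of_mul_eq_one_of_mul_eq_one (l := ↑b⁻¹ * v) (r := v * ↑a⁻¹) ?_ ?_
  · rw [mul_assoc, ← hb, b.inv_mul]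
  · rw [← mul_assoc, ← ha, a.mul_inv]

theorem isNilpotent_of_isNilpotent_mk' (hI : ∀ x ∈ I, IsNilpotent x) {y : R}
    (hy : IsNilpotent (I.ringCon.mk' y)) : IsNilpotent y := by
  obtain ⟨m, hm⟩ := hy
  obtain ⟨k, hk⟩ := hI _ (mk'_eq_zero_iff.mp (by rwa [map_pow]) : y ^ m ∈ I)
  exact ⟨m * k, by rw [pow_mul, hk]⟩

theorem exists_isCleanElem_mk'_eq (hnil : ∀ x ∈ I, IsNilpotent x) (hI : I ≤ jacobson ⊥)
    {b : I.ringCon.Quotient} (hb : IsCleanElem b) :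
    ∃ a : R, IsCleanElem a ∧ I.ringCon.mk' a = b := by
  obtain ⟨ε, ω, hε, hω, rfl⟩ := hb
  obtain ⟨e, he, rfl⟩ := exists_isIdempotentElem_eq_of_ker_isNilpotent I.ringCon.mk'
    (fun x hx => hnil x (mk'_eq_zero_iff.mp hx)) ε
    (RingHom.mem_range.2 (I.ringCon.mk'_surjective ε)) hε
  obtain ⟨u, rfl⟩ := I.ringCon.mk'_surjective ω
  exact ⟨e + u, ⟨e, u, he, isUnit_of_isUnit_mk' hI hω, rfl⟩, map_add _ e u⟩

end TwoSidedIdeal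

namespace IsCSNCRing

variable {R : Type*} [Ring R]

theorem isNilpotent_of_mem_jacobson (hR : IsCSNCRing R) {x : R}
    (hx : x ∈ TwoSidedIdeal.jacobson (⊥ : TwoSidedIdeal R)) : IsNilpotent x := by
  have hu := TwoSidedIdeal.isUnit_one_sub_of_mem_jacobson_bot hx
  have hclean : IsCleanElem x := ⟨1, x - 1, .one, by simpa using hu.neg, by abel⟩
  have h := (hR x hclean).isNilpotent_sub_sq
  rwa [sq, ← mul_one_sub, hu.isNilpotent_mul_unit_of_commute_iff
    ((Commute.one_right x).sub_right (Commute.refl x))] at h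

theorem quotient (hR : IsCSNCRing R) {I : TwoSidedIdeal R}
    (hI : I ≤ TwoSidedIdeal.jacobson ⊥) : IsCSNCRing I.ringCon.Quotient := by
  intro b hb
  obtain ⟨a, ha, rfl⟩ := TwoSidedIdeal.exists_isCleanElem_mk'_eq
    (fun x hx => hR.isNilpotent_of_mem_jacobson (hI hx)) hI hb
  exact (hR a ha).map _

theorem of_quotient {I : TwoSidedIdeal R} (hnil : ∀ x ∈ I, IsNilpotent x)
    (hQ : IsCSNCRing I.ringCon.Quotient) : IsCSNCRing R := by
  intro a ha
  have h := (hQ _ (ha.map I.ringCon.mk')).isNilpotent_sub_sq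
  rw [← map_pow, ← map_sub] at h
  exact .of_isNilpotent_sub_sq (TwoSidedIdeal.isNilpotent_of_isNilpotent_mk' hnil h)

end IsCSNCRing

theorem stmt_11 (R : Type*) [Ring R] (I : TwoSidedIdeal R)
    (hIJ : I ≤ TwoSidedIdeal.jacobson (⊥ : TwoSidedIdeal R)) :
    IsCSNCRing R ↔ (∀ x ∈ I, IsNilpotent x) ∧ IsCSNCRing I.ringCon.Quotient :=
  ⟨fun hR => ⟨fun _ hx => hR.isNilpotent_of_mem_jacobson (hIJ hx), hR.quotient hIJ⟩,
    fun ⟨hnil, hQ⟩ => .of_quotient hnil hQ⟩
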